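/- For every finite subset I ⊆ C, every sequence vI ∈ Seq(I), and every s ∈ {1,…,n}, the identity B_{vI}(t_I; z_s) = ∑_{vJ ∈ Seq(I)} S(vI,vJ)^{(s)} · E_{vJ;s}(t_I; z_s) holds in the field ℂ(t). -/

import Mathlib

/- STATEMENT 0.
Fix a finite index set `C`, `n ≥ 1` distinct complex numbers `z 1, …, z n`, a symmetric map
`a : C × C → ℂ` and numbers `b i s = a(i,s)`.  For a sequence `vI ∈ Seq(I)` (a nodup list
enumerating the finite set `I ⊆ C`) and `s`, the rational functions `B_{vI}(t_I; z_s)`,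
`E_{vI;s}(t_I;z_s)` and the numbers `S(vI,vJ)^{(s)}` are defined below; the theorem asserts
`B_{vI}(t_I; z_s) = ∑_{vJ ∈ Seq(I)} S(vI,vJ)^{(s)} · E_{vJ;s}(t_I; z_s)` in `ℂ(t)`. -/

noncomputable section

/-- The field `ℂ(t)` of rational functions in commuting variables `t i`, `i ∈ C`. -/
abbrev FF (C : Type) := FractionRing (MvPolynomial C ℂ)

/-- The variable `t i` as an element of `ℂ(t)`. -/
def tv {C : Type} (i : C) : FF C := algebraMap (MvPolynomial C ℂ) (FF C) (MvPolynomial.X i)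

/-- A complex constant as an element of `ℂ(t)`. -/
def cc {C : Type} (w : ℂ) : FF C := algebraMap (MvPolynomial C ℂ) (FF C) (MvPolynomial.C w)

/-- Auxiliary product: `Eaux w [i₁,…,i_N] = 1/(t_{i₁} − w) · ∏_{j=2}^N 1/(t_{i_j} − t_{i_{j−1}})`. -/
def Eaux {C : Type} (w : FF C) : List C → FF C
  | [] => 1
  | i :: tl => (tv i - w)⁻¹ * Eaux (tv i) tl

/-- `E_{vI;s}(t_I; z_s)` for `vI = (i₁,…,i_N)`. -/
def Efun {C : Type} (z : ℂ) (l : List C) : FF C := Eaux (cc z) l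

/-- `B_{vI}(t_I; z_s) = ∏_{p=1}^N ( a(i_p,s)/(t_{i_p} − z_s) + ∑_{q<p} a(i_p,i_q)/(t_{i_p} − t_{i_q}) )`. -/
def Bfun {C : Type} (a : C → C → ℂ) (b : C → ℂ) (z : ℂ) (l : List C) : FF C :=
  ∏ p : Fin l.length,
    (cc (b (l.get p)) / (tv (l.get p) - cc z)
      + ∑ q : Fin l.length, if q < p then
          cc (a (l.get p) (l.get q)) / (tv (l.get p) - tv (l.get q)) else 0)

/-- The recursively defined numbers `S(vI,vJ)^{(s)}`, with the second sequence `vJ` given in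
reversed order (so that the recursion removes its head, which is the last entry `j_N` of `vJ`). -/
def Ssym {C : Type} [DecidableEq C] (a : C → C → ℂ) (b : C → ℂ) : List C → List C → ℂ
  | vI, [] => if vI = [] then 1 else 0
  | vI, j :: rest =>
    ∑ q : Fin vI.length,
      if vI.get q = j then
        (b j + ∑ p : Fin vI.length, if p < q then a (vI.get p) j else 0)
          * Ssym a b (vI.eraseIdx q) rest
      else 0

/-- `S(vI,vJ)^{(s)}`. -/
def Sfun {C : Type} [DecidableEq C] (a : C → C → ℂ) (b : C → ℂ) (vI vJ : List C) : ℂ :=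
  Ssym a b vI vJ.reverse

/-
Induction on `vI`, appending one entry `i`. Then `B` gains the factor
`b_i/(t_i - z) + ∑_k a(i,k)/(t_i - t_k)`. For each sequence `vJ` of the old set, the partial
fraction identity `1/((x-w)(v-w)) = 1/((x-w)(v-x)) + 1/((x-v)(v-w))` expands this factor times
`E_{vJ}` into `∑_m (b_i + ∑_{k among the first m entries of vJ} a(i,k)) E_{vJ'}`, where `vJ'` is
`vJ` with `i` inserted at position `m`. These are exactly the coefficients produced by the
recursion for `S`: when `i` is removed from the end of `vI ++ [i]`, the entries still present are
those of `vJ` before `i`. Finally, the sequences of the enlarged set are exactly the insertions of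
`i` into the sequences of the old one.
-/

section ListFacts
variable {α M : Type*}

@[to_additive]
theorem prod_univ_length_append_singleton [CommMonoid M] (l : List α) (x : α)
    (f : Fin (l ++ [x]).length → M) :
    ∏ q, f q = (∏ q : Fin l.length, f (q.castLE (by simp))) * f ⟨l.length, by simp⟩ := by
  rw [← Fin.prod_congr' f (by simp : l.length + 1 = _), Fin.prod_univ_castSucc]
  rfl

theorem sum_ite_lt_castLE_append_singleton [AddCommMonoid M] (l : List α) (x : α) (g : α → M)
    (q : Fin l.length) :
    ∑ p : Fin (l ++ [x]).length, (if p < q.castLE (by simp) then g ((l ++ [x]).get p) else 0)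
      = ∑ p : Fin l.length, if p < q then g (l.get p) else 0 := by
  rw [sum_univ_length_append_singleton]
  simp [List.getElem_append_left, Fin.lt_def, -Fin.val_fin_lt, not_lt.2 q.isLt.le]

theorem sum_ite_lt_length_append_singleton [AddCommMonoid M] (l : List α) (x : α) (g : α → M) :
    ∑ p : Fin (l ++ [x]).length, (if p < ⟨l.length, by simp⟩ then g ((l ++ [x]).get p) else 0)
      = (l.map g).sum := by
  rw [sum_univ_length_append_singleton]
  simp [List.getElem_append_left, Fin.lt_def, -Fin.val_fin_lt]

theorem insertIdx_eq_take_append_cons_drop (x : α) :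
    ∀ {l : List α} {m : ℕ}, m ≤ l.length → l.insertIdx m x = l.take m ++ x :: l.drop m
  | l, 0, _ => by simp
  | [], _ + 1, h => by simp at h
  | y :: l, m + 1, h => by
    simp [List.insertIdx_succ_cons,
      insertIdx_eq_take_append_cons_drop x (l := l) (m := m) (by simpa using h)]

theorem sum_permutations_append_singleton [DecidableEq α] [AddCommMonoid M] {l : List α} {x : α}
    (h : (l ++ [x]).Nodup) (f : List α → M) :
    ∑ v ∈ (l ++ [x]).permutations.toFinset, f v
      = ∑ v ∈ l.permutations.toFinset,
          ∑ m ∈ Finset.range (l.length + 1), f (v.insertIdx m x) := by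
  have hx : (l ++ [x]).permutations.Perm (x :: l).permutations' :=
    (List.perm_append_singleton x l).permutations.trans (List.permutations_perm_permutations' _)
  have hl := List.permutations_perm_permutations' l
  rw [List.toFinset_eq_of_perm _ _ hx, List.toFinset_eq_of_perm _ _ hl,
    List.sum_toFinset _ (hx.nodup_iff.1 (List.nodup_permutations _ h)),
    List.sum_toFinset _ (hl.nodup_iff.1 (List.nodup_permutations _ (List.nodup_append.1 h).1))]
  simp only [List.permutations', List.flatMap, List.map_flatten, List.sum_flatten, List.map_map]
  refine congrArg List.sum (List.map_congr_left fun v hv => ?_)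
  have hlen : v.length = l.length := (List.mem_permutations'.1 hv).length_eq
  have hins : v.permutations'Aux x = (List.range (l.length + 1)).map (v.insertIdx · x) :=
    List.ext_getElem (by simp [hlen]) fun m _ _ => by simp [List.getElem_permutations'Aux]
  rw [← List.toFinset_range, List.sum_toFinset _ List.nodup_range, Function.comp_apply,
    Function.comp_apply, hins, List.map_map]
  rfl

end ListFacts

theorem inv_sub_mul_inv_sub {K : Type*} [Field K] {x v w : K} (hxw : x ≠ w) (hvw : v ≠ w)
    (hxv : x ≠ v) :
    (x - w)⁻¹ * (v - w)⁻¹ = (x - w)⁻¹ * (v - x)⁻¹ + (x - v)⁻¹ * (v - w)⁻¹ := by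
  have h1 : x - w ≠ 0 := sub_ne_zero.mpr hxw
  have h2 : v - w ≠ 0 := sub_ne_zero.mpr hvw
  have h3 : x - v ≠ 0 := sub_ne_zero.mpr hxv
  have h4 : v - x ≠ 0 := sub_ne_zero.mpr hxv.symm
  field_simp
  ring

section
variable {C : Type}

theorem tv_injective : Function.Injective (tv : C → FF C) :=
  (IsFractionRing.injective (MvPolynomial C ℂ) (FF C)).comp MvPolynomial.X_injective

theorem cc_eq_algebraMap (w : ℂ) : (cc w : FF C) = algebraMap ℂ (FF C) w := by
  rw [IsScalarTower.algebraMap_apply ℂ (MvPolynomial C ℂ)]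
  rfl

theorem tv_ne_cc (i : C) (w : ℂ) : (tv i : FF C) ≠ cc w := by
  intro h
  have := congrArg MvPolynomial.totalDegree (IsFractionRing.injective (MvPolynomial C ℂ) (FF C) h)
  simp at this

theorem mul_Eaux_eq_sum_insertIdx (i : C) (f : C → FF C) :
    ∀ (l : List C) (w c : FF C), (tv i :: w :: l.map tv).Nodup →
      (c / (tv i - w) + (l.map fun k => f k / (tv i - tv k)).sum) * Eaux w l
        = ∑ m ∈ Finset.range (l.length + 1),
            (c + ((l.take m).map f).sum) * Eaux w (l.insertIdx m i)
  | [], w, c, _ => by simp [Eaux, div_eq_mul_inv]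
  | j :: l, w, c, hnd => by
    have ih := mul_Eaux_eq_sum_insertIdx i f l (tv j) (c + f j)
      (hnd.sublist ((List.sublist_cons_self _ _).cons_cons _))
    simp only [List.map_cons, List.nodup_cons, List.mem_cons, not_or] at hnd
    obtain ⟨⟨hiw, hij, -⟩, ⟨hjw, -⟩, -⟩ := hnd
    rw [Finset.sum_range_succ']
    simp only [List.insertIdx_zero, List.insertIdx_succ_cons, List.take_succ_cons, List.take_zero,
      List.map_cons, List.sum_cons, List.map_nil, List.sum_nil, add_zero, List.length_cons, Eaux]
    calc _ = (tv j - w)⁻¹ * (((c + f j) / (tv i - tv j)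
            + (l.map fun k => f k / (tv i - tv k)).sum) * Eaux (tv j) l)
          + c * ((tv i - w)⁻¹ * ((tv j - tv i)⁻¹ * Eaux (tv j) l)) := by
          linear_combination (c * Eaux (tv j) l) * inv_sub_mul_inv_sub hiw (Ne.symm hjw) hij
      _ = _ := by
          rw [ih, Finset.mul_sum]
          exact congrArg (· + _) (Finset.sum_congr rfl fun m _ => by ring)

variable (a : C → C → ℂ) (b : C → ℂ)

theorem Bfun_append_singleton (z : ℂ) (l : List C) (i : C) :
    Bfun a b z (l ++ [i]) = Bfun a b z l
      * (cc (b i) / (tv i - cc z) + (l.map fun k => cc (a i k) / (tv i - tv k)).sum) := by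
  unfold Bfun
  rw [prod_univ_length_append_singleton]
  congr 1
  · refine Finset.prod_congr rfl fun p _ => ?_
    rw [sum_ite_lt_castLE_append_singleton (g := fun k => cc (a _ k) / (tv _ - tv k))]
    simp [List.getElem_append_left]
  · rw [sum_ite_lt_length_append_singleton (g := fun k => cc (a _ k) / (tv _ - tv k))]
    simp

variable [DecidableEq C]

theorem Ssym_append_singleton (ha : ∀ i j, a i j = a j i) {i : C} :
    ∀ (R P l : List C), i ∉ l → (R ++ P).Perm l →
      Ssym a b (l ++ [i]) (R ++ i :: P) = (b i + (P.map (a i)).sum) * Ssym a b l (R ++ P)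
  | [], P, l, hi, hperm => by
    rw [List.nil_append] at hperm
    have hcoef : (l.map fun k => a k i).sum = (P.map (a i)).sum := by
      rw [(hperm.map (a i)).sum_eq]
      simp [ha]
    rw [List.nil_append, Ssym, sum_univ_length_append_singleton, Finset.sum_eq_zero, zero_add,
      if_pos (by simp), sum_ite_lt_length_append_singleton (g := (a · i)), hcoef]
    · simp [List.eraseIdx_append_of_length_le]
    · intro q _
      rw [if_neg]
      simp only [List.get_eq_getElem, Fin.val_castLE, List.getElem_append_left q.isLt]
      exact fun h => hi (h ▸ List.getElem_mem q.isLt)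
  | j :: R, P, l, hi, hperm => by
    have hij : i ≠ j := by
      rintro rfl
      exact hi (hperm.subset List.mem_cons_self)
    rw [List.cons_append, List.cons_append, Ssym, Ssym, sum_univ_length_append_singleton,
      if_neg (by simpa using hij), add_zero, Finset.mul_sum]
    refine Finset.sum_congr rfl fun q _ => ?_
    rw [sum_ite_lt_castLE_append_singleton (g := (a · j))]
    simp only [List.get_eq_getElem, Fin.val_castLE, List.getElem_append_left q.isLt]
    split_ifs with hq
    · have hperm' : (R ++ P).Perm (l.eraseIdx q) :=
        (List.perm_cons j).1 (hperm.trans (hq ▸ List.getElem_cons_eraseIdx_perm q.isLt).symm)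
      rw [List.eraseIdx_append_of_lt_length q.isLt, Ssym_append_singleton ha R P (l.eraseIdx q)
        (hi ∘ List.mem_of_mem_eraseIdx) hperm']
      ring
    · simp

theorem Sfun_append_singleton_insertIdx (ha : ∀ i j, a i j = a j i) {l vJ : List C} {i : C}
    (hi : i ∉ l) (hperm : vJ.Perm l) {m : ℕ} (hm : m ≤ vJ.length) :
    Sfun a b (l ++ [i]) (vJ.insertIdx m i)
      = (b i + ((vJ.take m).map (a i)).sum) * Sfun a b l vJ := by
  have hrev : vJ.reverse = (vJ.drop m).reverse ++ (vJ.take m).reverse := by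
    rw [← List.reverse_append, List.take_append_drop]
  unfold Sfun
  rw [insertIdx_eq_take_append_cons_drop i hm]
  simp only [List.reverse_append, List.reverse_cons, List.append_assoc, List.singleton_append]
  rw [Ssym_append_singleton a b ha _ _ l hi (hrev ▸ vJ.reverse_perm.trans hperm),
    List.map_reverse, List.sum_reverse, ← hrev]

theorem Bfun_eq_sum_Sfun_mul_Efun (ha : ∀ i j, a i j = a j i) (z : ℂ) {l : List C}
    (hl : l.Nodup) :
    Bfun a b z l = ∑ vJ ∈ l.permutations.toFinset, cc (Sfun a b l vJ) * Efun z vJ := by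
  induction l using List.reverseRecOn with
  | nil => simp [Bfun, Sfun, Ssym, Efun, Eaux, cc_eq_algebraMap]
  | append_singleton l i ih =>
    obtain ⟨hl', -, hi⟩ := List.nodup_append.1 hl
    replace hi : i ∉ l := fun h => hi i h i (List.mem_singleton_self i) rfl
    rw [Bfun_append_singleton, ih hl', Finset.sum_mul, sum_permutations_append_singleton hl]
    refine Finset.sum_congr rfl fun vJ hvJ => ?_
    have hperm : vJ.Perm l := List.mem_permutations.1 (List.mem_toFinset.1 hvJ)
    have hnd : (tv i :: cc z :: vJ.map tv).Nodup := by
      have hiJ : i ∉ vJ := fun h => hi (hperm.subset h)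
      simp [List.nodup_cons, tv_injective.eq_iff, tv_ne_cc, hiJ,
        (hperm.nodup_iff.2 hl').map tv_injective]
    rw [mul_assoc, ← (hperm.map _).sum_eq, mul_comm (Efun z vJ), Efun,
      mul_Eaux_eq_sum_insertIdx i (fun k => cc (a i k)) vJ (cc z) (cc (b i)) hnd, Finset.mul_sum,
      hperm.length_eq]
    refine Finset.sum_congr rfl fun m hm => ?_
    rw [Sfun_append_singleton_insertIdx a b ha hi hperm
      (hperm.length_eq ▸ Nat.lt_succ_iff.1 (Finset.mem_range.1 hm))]
    simp only [cc_eq_algebraMap, List.map_take, map_mul, map_add, map_list_sum, List.map_map,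
      Function.comp_def, Efun]
    ring

end

theorem statement0 {C : Type} [DecidableEq C]
    (n : ℕ) (z : Fin n → ℂ)
    (a : C → C → ℂ) (ha : ∀ i j, a i j = a j i) (b : C → Fin n → ℂ)
    (vI : List C) (hnd : vI.Nodup) (s : Fin n) :
    Bfun a (fun i => b i s) (z s) vI
      = ∑ vJ ∈ vI.permutations.toFinset,
          cc (Sfun a (fun i => b i s) vI vJ) * Efun (z s) vJ :=
  Bfun_eq_sum_Sfun_mul_Efun a (fun i => b i s) ha (z s) hnd
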